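/- arXiv:2005.05780 — 2 statements merged into one kernel-verified Lean document; each statement's English description precedes it below -/
import Mathlib

section
/- Let n ≥ 3 be an integer, let a, b, c be nonzero complex numbers, set δ = b(1−n)/(na), and assume c ≠ −(b/(2n))·δ^{n−1}. Then there is no nonzero complex constant A for which the polynomial identity A·(a X^n + b X^{n−1} + c) = a(δ − X)^n + b(δ − X)^{n−1} + c holds in ℂ[X]. Consequently, there is no nonconstant meromorphic function f on ℂ satisfying A·(a f^n + b f^{n−1} + c) ≡ a g^n + b g^{n−1} + c with g = δ − f for some nonzero constant A. -/
open Complex Filter MeasureTheory Metric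
open scoped Classical

/-- The order of a function at a point, as an integer (`0` if not meromorphic or of
order `⊤`, i.e. identically zero near the point). -/
noncomputable def mOrd (f : ℂ → ℂ) (z : ℂ) : ℤ :=
  if h : MeromorphicAt f z then (WithTop.untopD 0 (meromorphicOrderAt f z)) else 0

/-- Multiplicity of `z` as an `α`-point of `f`. -/
noncomputable def zMult (f : ℂ → ℂ) (α z : ℂ) : ℕ :=
  (mOrd (fun w => f w - α) z).toNat

/-- Multiplicity of `z` as a pole of `f`. -/
noncomputable def pMult (f : ℂ → ℂ) (z : ℂ) : ℕ :=
  (-(mOrd f z)).toNat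

/-- Pointwise contribution of `z` to the multiset `E_f(S, k)`:
an `α`-point (`α ∈ S`) of multiplicity `m` counts `m` times if `m ≤ k`, else `k+1` times. -/
noncomputable def Ecount (f : ℂ → ℂ) (S : Set ℂ) (k : ℕ) (z : ℂ) : ℕ :=
  ∑ᶠ α ∈ S, min (zMult f α z) (k + 1)

/-- `f` and `g` share the set `S ⊆ ℂ` with weight `k`, i.e. `E_f(S,k) = E_g(S,k)`. -/
def EshareEq (f g : ℂ → ℂ) (S : Set ℂ) (k : ℕ) : Prop :=
  ∀ z : ℂ, Ecount f S k z = Ecount g S k z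

/-- `f` and `g` share the set `S ⊆ ℂ` counting multiplicities (weight `∞`). -/
def EshareEqCM (f g : ℂ → ℂ) (S : Set ℂ) : Prop :=
  ∀ z : ℂ, (∑ᶠ α ∈ S, zMult f α z) = ∑ᶠ α ∈ S, zMult g α z

/-- `f` and `g` share `{∞}` with weight `k`. -/
def EpoleEq (f g : ℂ → ℂ) (k : ℕ) : Prop :=
  ∀ z : ℂ, min (pMult f z) (k + 1) = min (pMult g z) (k + 1)

/-- `f` and `g` share `{∞}` counting multiplicities. -/
def EpoleEqCM (f g : ℂ → ℂ) : Prop :=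
  ∀ z : ℂ, pMult f z = pMult g z

/-- Equality of meromorphic functions: `f ≡ g`, i.e. `f = g` off a countable set. -/
def MEq (f g : ℂ → ℂ) : Prop :=
  ∃ D : Set ℂ, D.Countable ∧ ∀ z ∉ D, f z = g z

/-- `f` is a nonconstant meromorphic function in the plane. -/
def MNonconst (f : ℂ → ℂ) : Prop :=
  MeromorphicOn f Set.univ ∧ ¬ ∃ c : ℂ, MEq f (fun _ => c)

/-- The unintegrated counting function of a pointwise (multiplicity) count `w`:
number of points in the closed disc of radius `t`, counted with `w`. -/
noncomputable def ncount (w : ℂ → ℕ) (t : ℝ) : ℕ :=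
  ∑ᶠ z ∈ closedBall (0 : ℂ) t, w z

/-- The integrated counting function associated to an unintegrated one. -/
noncomputable def integN (nf : ℝ → ℕ) (r : ℝ) : ℝ :=
  (∫ t in (0:ℝ)..r, ((nf t : ℝ) - (nf 0 : ℝ)) / t) + (nf 0 : ℝ) * Real.log r

/-- The Nevanlinna integrated counting function `N(r, f)` of the poles of `f`. -/
noncomputable def NN (f : ℂ → ℂ) (r : ℝ) : ℝ :=
  integN (ncount (pMult f)) r

/-- The Nevanlinna proximity function `m(r, f)`. -/
noncomputable def mprox (f : ℂ → ℂ) (r : ℝ) : ℝ :=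
  (2 * Real.pi)⁻¹ *
    ∫ θ in (0:ℝ)..(2 * Real.pi), Real.log (max ‖f (r * Complex.exp (θ * Complex.I))‖ 1)

/-- The Nevanlinna characteristic `T(r, f)`. -/
noncomputable def Tchar (f : ℂ → ℂ) (r : ℝ) : ℝ :=
  mprox f r + NN f r

/-- `u` is a quantity of type `S(r, h)` : `u r = o(T(r, h))` as `r → ∞`, outside a
possible exceptional set of finite linear measure. -/
def SmallWrt (h : ℂ → ℂ) (u : ℝ → ℝ) : Prop :=
  ∃ E : Set ℝ, volume E < ⊤ ∧
    Tendsto (fun r => u r / Tchar h r) (atTop ⊓ Filter.principal Eᶜ) (nhds 0)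

/-! For `P = a Xⁿ + b Xⁿ⁻¹ + c`, a relation `A · P(X) = P(δ - X)` forces `A = (-1)ⁿ` from
the leading coefficients and `n a δ = -2b` from the next ones; with the critical point
`δ = b(1-n)/(na)` this leaves only `n = 3`, where the constant terms give `c = -(b/6) δ²`.
A nonconstant meromorphic `f` cannot satisfy `Q(f) ≡ 0` for a nonzero polynomial `Q`: each
level set `{f = r}` is countable, by the identity theorem, while `ℂ` is not. -/

open Filter Topology Polynomial

theorem Set.Countable.of_forall_eventually_nhdsNE_notMem {X : Type*} [TopologicalSpace X]
    [HereditarilyLindelofSpace X] {s : Set X} (h : ∀ x, ∀ᶠ z in 𝓝[≠] x, z ∉ s) :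
    s.Countable :=
  (HereditarilyLindelofSpace.isLindelof s).countable_of_isDiscrete
    (isDiscrete_iff_nhdsNE.2 fun x _ => inf_principal_eq_bot.2 (h x))

theorem Meromorphic.countable_setOf_eq_or_countable_setOf_ne {𝕜 E : Type*} [RCLike 𝕜]
    [NormedAddCommGroup E] [NormedSpace 𝕜 E] {f : 𝕜 → E} (hf : Meromorphic f) (r : E) :
    {z | f z = r}.Countable ∨ {z | f z ≠ r}.Countable := by
  have hg : Meromorphic (f - fun _ => r) := hf.sub fun _ => MeromorphicAt.const r _
  by_cases hfin : ∀ x, meromorphicOrderAt (f - fun _ => r) x ≠ ⊤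
  · refine Or.inl (Set.Countable.of_forall_eventually_nhdsNE_notMem fun x => ?_)
    filter_upwards [(meromorphicOrderAt_ne_top_iff_eventually_ne_zero (hg x)).1 (hfin x)]
      with z hz
    simpa [sub_eq_zero] using hz
  · have htop : ∀ x, meromorphicOrderAt (f - fun _ => r) x = ⊤ := by
      simpa [← hg.exists_meromorphicOrderAt_ne_top_iff_forall] using hfin
    refine Or.inr (Set.Countable.of_forall_eventually_nhdsNE_notMem fun x => ?_)
    filter_upwards [meromorphicOrderAt_eq_top_iff.1 (htop x)] with z hz
    simpa [sub_eq_zero] using hz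

theorem MNonconst.countable_setOf_eq {f : ℂ → ℂ} (hf : MNonconst f) (r : ℂ) :
    {z | f z = r}.Countable :=
  ((meromorphicOn_univ.1 hf.1).countable_setOf_eq_or_countable_setOf_ne r).resolve_right
    fun h => hf.2 ⟨r, _, h, fun _ hz => not_not.1 hz⟩

theorem MNonconst.eq_of_meq_eval {f : ℂ → ℂ} (hf : MNonconst f) {P Q : ℂ[X]}
    (h : MEq (fun z => P.eval (f z)) (fun z => Q.eval (f z))) : P = Q := by
  obtain ⟨D, hD, hPQ⟩ := h
  by_contra hne
  have hroots : {r | (P - Q).IsRoot r}.Finite := finite_setOfPred_isRoot (sub_ne_zero.2 hne)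
  apply not_countable_complex
  refine (hD.union (hroots.countable.biUnion fun r _ => hf.countable_setOf_eq r)).mono ?_
  intro z _
  by_cases hz : z ∈ D
  · exact Or.inl hz
  · exact Or.inr (Set.mem_biUnion (x := f z) (by simp [hPQ z hz]) rfl)

theorem coeff_C_sub_X_pow {R : Type*} [CommRing R] (δ : R) (n k : ℕ) :
    ((C δ - X) ^ n).coeff k = (-1) ^ n * (-δ) ^ (n - k) * n.choose k := by
  rw [show C δ - X = -(X + C (-δ)) by simp; ring, neg_pow, ← C_1, ← C_neg, ← C_pow, coeff_C_mul,
    coeff_X_add_C_pow, mul_assoc]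

theorem coeff_relations_of_C_mul_eq {K : Type*} [Field K] {n : ℕ} (hn : 2 ≤ n) {a b c δ A : K}
    (ha : a ≠ 0) (h : C A * (C a * X ^ n + C b * X ^ (n - 1) + C c)
      = C a * (C δ - X) ^ n + C b * (C δ - X) ^ (n - 1) + C c) :
    A = (-1) ^ n ∧ n * a * δ = -2 * b ∧ A * c = a * δ ^ n + b * δ ^ (n - 1) + c := by
  obtain ⟨m, rfl⟩ : ∃ m, n = m + 1 := ⟨n - 1, by omega⟩
  have hm : m ≠ 0 := by omega
  have hlead : A * a = a * (-1) ^ (m + 1) := by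
    simpa [coeff_C_sub_X_pow, coeff_X_pow, coeff_C] using congrArg (coeff · (m + 1)) h
  have hnext : A * b = -(a * ((-1) ^ (m + 1) * δ * (m + 1))) + b * (-1) ^ m := by
    simpa [coeff_C_sub_X_pow, coeff_X_pow, coeff_C, hm] using congrArg (coeff · m) h
  have hconst : A * c = a * δ ^ (m + 1) + b * δ ^ m + c := by
    simpa [hm] using congrArg (eval 0) h
  obtain rfl : A = (-1) ^ (m + 1) := mul_right_cancel₀ ha (by rw [hlead, mul_comm])
  have hs : ((-1 : K) ^ m) ^ 2 = 1 := by rw [← pow_mul, mul_comm, pow_mul]; simp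
  refine ⟨rfl, ?_, by simpa using hconst⟩
  push_cast
  linear_combination (-(-1 : K) ^ m) * hnext - (2 * b + a * δ * (m + 1)) * hs

open Polynomial in
theorem no_degenerate_relation_general
    (n : ℕ) (hn : 3 ≤ n) (a b c : ℂ) (ha : a ≠ 0) (hb : b ≠ 0)
    (δ : ℂ) (hδ : δ = b * (1 - (n : ℂ)) / ((n : ℂ) * a))
    (hcrit : c ≠ -(b / (2 * (n : ℂ))) * δ ^ (n - 1)) :
    (¬ ∃ A : ℂ, A ≠ 0 ∧
        C A * (C a * X ^ n + C b * X ^ (n - 1) + C c)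
          = C a * (C δ - X) ^ n + C b * (C δ - X) ^ (n - 1) + C c) ∧
      (¬ ∃ A : ℂ, A ≠ 0 ∧ ∃ f : ℂ → ℂ, MNonconst f ∧
        MEq (fun z => A * (a * f z ^ n + b * f z ^ (n - 1) + c))
          (fun z => a * (δ - f z) ^ n + b * (δ - f z) ^ (n - 1) + c)) := by
  have hrel : ¬ ∃ A : ℂ, A ≠ 0 ∧
      C A * (C a * X ^ n + C b * X ^ (n - 1) + C c)
        = C a * (C δ - X) ^ n + C b * (C δ - X) ^ (n - 1) + C c := by
    rintro ⟨A, -, h⟩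
    obtain ⟨rfl, hδb, hAc⟩ := coeff_relations_of_C_mul_eq (by omega) ha h
    have hδn : (n : ℂ) * a * δ = b * (1 - n) := by
      have hn0 : (n : ℂ) ≠ 0 := by exact_mod_cast (by omega : n ≠ 0)
      rw [hδ]
      field_simp
    obtain rfl : n = 3 := by
      have : b * (3 - n) = 0 := by linear_combination hδb - hδn
      exact_mod_cast (sub_eq_zero.1 ((mul_eq_zero.1 this).resolve_left hb)).symm
    apply hcrit
    norm_num at hAc hδn ⊢
    linear_combination (-1 / 2 : ℂ) * hAc - (δ ^ 2 / 6) * hδn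
  refine ⟨hrel, ?_⟩
  rintro ⟨A, hA, f, hf, hfeq⟩
  exact hrel ⟨A, hA, hf.eq_of_meq_eval (by simpa using hfeq)⟩

open Polynomial in
/-- Nonexistence of the degenerate relation in Subcases 2.2.1–2.2.3: if
`c ≠ -(b/(2n)) δⁿ⁻¹` with `δ = b(1-n)/(na)`, there is no nonzero constant `A` with
`A (a Xⁿ + b Xⁿ⁻¹ + c) = a (δ-X)ⁿ + b (δ-X)ⁿ⁻¹ + c` as polynomials, and consequently
no nonconstant meromorphic `f` satisfying `A(a fⁿ + b fⁿ⁻¹ + c) ≡ a gⁿ + b gⁿ⁻¹ + c`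
with `g = δ - f`. -/
theorem no_degenerate_relation
    (n : ℕ) (hn : 3 ≤ n) (a b c : ℂ) (ha : a ≠ 0) (hb : b ≠ 0) (hc : c ≠ 0)
    (δ : ℂ) (hδ : δ = b * (1 - (n : ℂ)) / ((n : ℂ) * a))
    (hcrit : c ≠ -(b / (2 * (n : ℂ))) * δ ^ (n - 1)) :
    (¬ ∃ A : ℂ, A ≠ 0 ∧
        C A * (C a * X ^ n + C b * X ^ (n - 1) + C c)
          = C a * (C δ - X) ^ n + C b * (C δ - X) ^ (n - 1) + C c) ∧
      (¬ ∃ A : ℂ, A ≠ 0 ∧ ∃ f : ℂ → ℂ, MNonconst f ∧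
        MEq (fun z => A * (a * f z ^ n + b * f z ^ (n - 1) + c))
          (fun z => a * (δ - f z) ^ n + b * (δ - f z) ^ (n - 1) + c)) :=
  no_degenerate_relation_general n hn a b c ha hb δ hδ hcrit
end

section
/- Let a = 1, b = 3, n = 3, c = −2 (so that c = −(b/(2n))·δ^{n−1} with δ = b(1−n)/(na) = −2). Set S₁ = {0, −2}, S₂ = {z ∈ ℂ : z³ + 3z² − 2 = 0} = {−1, −1−√3, −1+√3} and S₃ = {∞}. Then for every nonconstant meromorphic function φ on ℂ, the functions f = φ − 2 and g = −φ satisfy E_f(S_j, ∞) = E_g(S_j, ∞) for j = 1, 2, 3 (in particular E_f(S₁, 0) = E_g(S₁, 0), E_f(S₂, 3) = E_g(S₂, 3), E_f(S₃, 1) = E_g(S₃, 1)), yet f ≢ g. Hence the hypothesis c ≠ −(b/(2n))·δ^{n−1} in the three-set uniqueness theorem cannot be dropped. -/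
open Complex Filter MeasureTheory Metric
open scoped Classical

/-! The reflection `σ(w) = -2 - w` about `-1` fixes `S₁ = {0, -2}`, and it fixes `S₂` because
`z³ + 3z² - 2 = (z + 1)³ - 3(z + 1)` is odd in `z + 1`; it also fixes `∞`. Since `g = σ ∘ f`
and `σ` is affine, `z` is an `α`-point of `f` exactly when it is a `σ(α)`-point of `g`, with the
same multiplicity, and the poles of `f` and `g` coincide with multiplicities. Finally
`f ≡ g` would force `φ ≡ 1`. -/

lemma mOrd_eq_untopD (f : ℂ → ℂ) (z : ℂ) :
    mOrd f z = (meromorphicOrderAt f z).untopD 0 := by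
  by_cases hf : MeromorphicAt f z
  · rw [mOrd, dif_pos hf]
  · rw [mOrd, dif_neg hf, meromorphicOrderAt_of_not_meromorphicAt hf]
    rfl

lemma mOrd_neg (f : ℂ → ℂ) (z : ℂ) : mOrd (fun w => -f w) z = mOrd f z := by
  rw [mOrd_eq_untopD, mOrd_eq_untopD, meromorphicOrderAt_neg (f := f)]
  rfl

lemma pMult_eq_zero_of_nonneg {f : ℂ → ℂ} {z : ℂ} (h : 0 ≤ meromorphicOrderAt f z) :
    pMult f z = 0 := by
  rw [pMult, mOrd_eq_untopD]
  cases hf : meromorphicOrderAt f z with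
  | top => rfl
  | coe n =>
    rw [hf] at h
    simpa using WithTop.coe_le_coe.mp h

lemma meromorphicOrderAt_add_const_of_neg {f : ℂ → ℂ} {z : ℂ} (h : meromorphicOrderAt f z < 0)
    (c : ℂ) : meromorphicOrderAt (fun w => f w + c) z = meromorphicOrderAt f z := by
  refine meromorphicOrderAt_add_eq_left_of_lt (f₂ := fun _ => c) (.const c z) (h.trans_le ?_)
  rw [meromorphicOrderAt_const]
  split_ifs <;> simp

lemma pMult_add_const (f : ℂ → ℂ) (c z : ℂ) : pMult (fun w => f w + c) z = pMult f z := by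
  by_cases hf : meromorphicOrderAt f z < 0
  · rw [pMult, pMult, mOrd_eq_untopD, mOrd_eq_untopD, meromorphicOrderAt_add_const_of_neg hf]
  by_cases hfc : meromorphicOrderAt (fun w => f w + c) z < 0
  · have hcancel := meromorphicOrderAt_add_const_of_neg hfc (-c)
    simp only [add_neg_cancel_right] at hcancel
    exact absurd (hcancel ▸ hfc) hf
  rw [pMult_eq_zero_of_nonneg (not_lt.mp hf), pMult_eq_zero_of_nonneg (not_lt.mp hfc)]

lemma pMult_const_sub (f : ℂ → ℂ) (a z : ℂ) : pMult (fun w => a - f w) z = pMult f z := by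
  simp only [sub_eq_neg_add _ (f _)]
  rw [pMult_add_const (fun w => -f w), pMult, mOrd_neg, pMult]

lemma zMult_const_sub (f : ℂ → ℂ) (a α z : ℂ) :
    zMult (fun w => a - f w) (a - α) z = zMult f α z := by
  have hrefl : (fun w => a - f w - (a - α)) = fun w => -(f w - α) := by
    funext w; ring
  rw [zMult, hrefl, mOrd_neg, zMult]

section Reflection

variable {S : Set ℂ} {a : ℂ}

lemma finsum_mem_zMult_const_sub (f : ℂ → ℂ) (hS : ∀ α ∈ S, a - α ∈ S) (u : ℕ → ℕ) (z : ℂ) :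
    ∑ᶠ α ∈ S, u (zMult f α z) = ∑ᶠ α ∈ S, u (zMult (fun w => a - f w) α z) := by
  have hinv : Set.InvOn (a - ·) (a - ·) S S :=
    ⟨fun α _ => sub_sub_cancel a α, fun α _ => sub_sub_cancel a α⟩
  refine finsum_mem_eq_of_bijOn (a - ·) (hinv.bijOn hS hS) fun α _ => ?_
  rw [zMult_const_sub]

lemma EshareEqCM_const_sub (f : ℂ → ℂ) (hS : ∀ α ∈ S, a - α ∈ S) :
    EshareEqCM f (fun w => a - f w) S :=
  finsum_mem_zMult_const_sub f hS id

lemma EshareEq_const_sub (f : ℂ → ℂ) (hS : ∀ α ∈ S, a - α ∈ S) (k : ℕ) :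
    EshareEq f (fun w => a - f w) S k :=
  finsum_mem_zMult_const_sub f hS (min · (k + 1))

end Reflection

lemma EpoleEqCM_const_sub (f : ℂ → ℂ) (a : ℂ) : EpoleEqCM f (fun w => a - f w) :=
  fun z => (pMult_const_sub f a z).symm

lemma EpoleEqCM.epoleEq {f g : ℂ → ℂ} (h : EpoleEqCM f g) (k : ℕ) : EpoleEq f g k :=
  fun z => by rw [h z]

lemma not_MEq_const_sub_self {f : ℂ → ℂ} (hf : ¬ ∃ c : ℂ, MEq f fun _ => c) (a : ℂ) :
    ¬ MEq f fun w => a - f w := by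
  rintro ⟨D, hD, hfD⟩
  exact hf ⟨a / 2, D, hD, fun z hz => by linear_combination hfD z hz / 2⟩

lemma not_MEq_const_of_sub_const {f : ℂ → ℂ} (hf : ¬ ∃ c : ℂ, MEq f fun _ => c) (b : ℂ) :
    ¬ ∃ c : ℂ, MEq (fun w => f w - b) fun _ => c := by
  rintro ⟨c, D, hD, hfD⟩
  exact hf ⟨c + b, D, hD, fun z hz => by linear_combination hfD z hz⟩

lemma setOf_cubic_eq : {z : ℂ | z ^ 3 + 3 * z ^ 2 - 2 = 0}
    = {-1, -1 - (Real.sqrt 3 : ℂ), -1 + (Real.sqrt 3 : ℂ)} := by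
  set s : ℂ := (Real.sqrt 3 : ℂ)
  have hs : s ^ 2 = 3 := by
    rw [← Complex.ofReal_pow, Real.sq_sqrt (by norm_num : (0 : ℝ) ≤ 3)]
    norm_num
  have hfactor : ∀ z : ℂ, z ^ 3 + 3 * z ^ 2 - 2 = (z - -1) * ((z - (-1 - s)) * (z - (-1 + s))) :=
    fun z => by linear_combination (z + 1) * hs
  ext z
  simp only [Set.mem_ofPred_eq, Set.mem_insert_iff, Set.mem_singleton_iff, hfactor, mul_eq_zero,
    sub_eq_zero]

lemma neg_two_sub_mem_pair : ∀ α ∈ ({0, -2} : Set ℂ), -2 - α ∈ ({0, -2} : Set ℂ) := by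
  rintro α (rfl | rfl) <;> norm_num

lemma neg_two_sub_mem_cubic_roots :
    ∀ α ∈ {z : ℂ | z ^ 3 + 3 * z ^ 2 - 2 = 0}, -2 - α ∈ {z : ℂ | z ^ 3 + 3 * z ^ 2 - 2 = 0} :=
  fun α hα => by
    simp only [Set.mem_ofPred_eq] at hα ⊢
    linear_combination -hα

/-- **Example 1.1.** For `a = 1`, `b = 3`, `n = 3`, `c = -2` (so `c = -(b/(2n)) δⁿ⁻¹`),
with `S₁ = {0, -2}`, `S₂ = {z : z³ + 3z² - 2 = 0} = {-1, -1-√3, -1+√3}`, `S₃ = {∞}`,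
the functions `f = φ - 2` and `g = -φ` share each `Sⱼ` counting multiplicities (hence
with weights `(0, 3, 1)`) for every nonconstant meromorphic `φ`, yet `f ≢ g`. -/
theorem example_critical_c_sharp :
    ({z : ℂ | z ^ 3 + 3 * z ^ 2 - 2 = 0}
        = {-1, -1 - (Real.sqrt 3 : ℂ), -1 + (Real.sqrt 3 : ℂ)}) ∧
      ∀ φ : ℂ → ℂ, MNonconst φ →
        EshareEqCM (fun z => φ z - 2) (fun z => -φ z) {0, -2} ∧
        EshareEqCM (fun z => φ z - 2) (fun z => -φ z)
          {z : ℂ | z ^ 3 + 3 * z ^ 2 - 2 = 0} ∧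
        EpoleEqCM (fun z => φ z - 2) (fun z => -φ z) ∧
        EshareEq (fun z => φ z - 2) (fun z => -φ z) {0, -2} 0 ∧
        EshareEq (fun z => φ z - 2) (fun z => -φ z)
          {z : ℂ | z ^ 3 + 3 * z ^ 2 - 2 = 0} 3 ∧
        EpoleEq (fun z => φ z - 2) (fun z => -φ z) 1 ∧
        ¬ MEq (fun z => φ z - 2) (fun z => -φ z) := by
  refine ⟨setOf_cubic_eq, fun φ hφ => ?_⟩
  have hg : (fun z => -φ z) = fun z => -2 - (φ z - 2) := by
    funext z; ring
  rw [hg]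
  exact ⟨EshareEqCM_const_sub _ neg_two_sub_mem_pair,
    EshareEqCM_const_sub _ neg_two_sub_mem_cubic_roots,
    EpoleEqCM_const_sub _ _,
    EshareEq_const_sub _ neg_two_sub_mem_pair 0,
    EshareEq_const_sub _ neg_two_sub_mem_cubic_roots 3,
    (EpoleEqCM_const_sub _ _).epoleEq 1,
    not_MEq_const_sub_self (not_MEq_const_of_sub_const hφ.2 2) _⟩
end
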